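/- Let a and b be independent random vectors in ℝ^M with E[b] = 0 and finite fourth moments E‖a‖⁴ < ∞ and E‖b‖⁴ < ∞. Then E‖a + b‖⁴ ≤ E‖a‖⁴ + 3·E‖b‖⁴ + 8·E[‖a‖²·‖b‖²]. -/

import Mathlib

/-!
Expanding `‖a + b‖⁴ = (‖a‖² + 2⟪a, b⟫ + ‖b‖²)²` and applying Cauchy–Schwarz bounds every term by
`‖a‖⁴`, `‖b‖⁴` and `‖a‖²‖b‖²`, except `4‖a‖²⟪a, b⟫`. By independence the expectation of the latter
is `4⟪E[‖a‖² a], E[b]⟫ = 0`.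
-/

open MeasureTheory ProbabilityTheory
open scoped RealInnerProductSpace

theorem norm_add_pow_four_le {E : Type*} [NormedAddCommGroup E] [InnerProductSpace ℝ E]
    (x y : E) :
    ‖x + y‖ ^ 4 ≤ ‖x‖ ^ 4 + 3 * ‖y‖ ^ 4 + 8 * (‖x‖ ^ 2 * ‖y‖ ^ 2) + 4 * ⟪‖x‖ ^ 2 • x, y⟫ := by
  have hsq : ‖x + y‖ ^ 2 = ‖x‖ ^ 2 + 2 * ⟪x, y⟫ + ‖y‖ ^ 2 := norm_add_sq_real x y
  have hcs : |⟪x, y⟫| ≤ ‖x‖ * ‖y‖ := abs_real_inner_le_norm x y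
  have hcs_sq : ⟪x, y⟫ ^ 2 ≤ ‖x‖ ^ 2 * ‖y‖ ^ 2 := by
    rw [← mul_pow, ← sq_abs]
    exact pow_le_pow_left₀ (abs_nonneg _) hcs 2
  have hcross : ‖y‖ ^ 2 * ⟪x, y⟫ ≤ ‖y‖ ^ 2 * (‖x‖ * ‖y‖) :=
    mul_le_mul_of_nonneg_left (le_of_abs_le hcs) (sq_nonneg _)
  rw [real_inner_smul_left, show ‖x + y‖ ^ 4 = (‖x + y‖ ^ 2) ^ 2 by ring, hsq]
  nlinarith [mul_nonneg (sq_nonneg ‖y‖) (sq_nonneg (‖x‖ - ‖y‖))]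

section IndepInner

variable {Ω E : Type*} [MeasurableSpace Ω] {μ : Measure Ω} [NormedAddCommGroup E]
  [InnerProductSpace ℝ E] [MeasurableSpace E] [BorelSpace E] {X Y : Ω → E}

theorem ProbabilityTheory.IndepFun.integrable_inner (hXY : IndepFun X Y μ)
    (hX : Integrable X μ) (hY : Integrable Y μ) : Integrable (fun ω => ⟪X ω, Y ω⟫) μ :=
  hXY.integrable_bilin hX hY (innerSL ℝ)

theorem ProbabilityTheory.IndepFun.integral_inner [CompleteSpace E] (hXY : IndepFun X Y μ)
    (hX : Integrable X μ) (hY : Integrable Y μ) :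
    ∫ ω, ⟪X ω, Y ω⟫ ∂μ = ⟪∫ ω, X ω ∂μ, ∫ ω, Y ω ∂μ⟫ :=
  hXY.integral_bilin hX hY (innerSL ℝ)

end IndepInner

section FourthMoments

variable {α E F : Type*} {m : MeasurableSpace α} {μ : Measure α} [IsFiniteMeasure μ]
  [NormedAddCommGroup E] [NormedAddCommGroup F] {f : α → E} {g : α → F}

theorem MeasureTheory.MemLp.integrable_norm_sq_mul_norm_sq (hf : MemLp f 4 μ)
    (hg : MemLp g 4 μ) : Integrable (fun x => ‖f x‖ ^ 2 * ‖g x‖ ^ 2) μ := by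
  refine ((hf.integrable_norm_pow' (p := 4)).add (hg.integrable_norm_pow' (p := 4))).mono'
    ((hf.1.norm.pow 2).mul (hg.1.norm.pow 2)) (ae_of_all _ fun x => ?_)
  rw [Real.norm_of_nonneg (by positivity), Pi.add_apply]
  nlinarith [sq_nonneg (‖f x‖ ^ 2 - ‖g x‖ ^ 2)]

theorem MeasureTheory.MemLp.integrable_norm_sq_smul [NormedSpace ℝ E] (hf : MemLp f 4 μ) :
    Integrable (fun x => ‖f x‖ ^ 2 • f x) μ := by
  have hcube : Integrable (fun x => ‖f x‖ ^ 3) μ :=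
    integrable_norm_pow_of_le hf.1 (by norm_num) (hf.integrable_norm_pow' (p := 4))
  refine hcube.mono' ((hf.1.norm.pow 2).smul hf.1) (ae_of_all _ fun x => ?_)
  rw [norm_smul, Real.norm_of_nonneg (by positivity)]
  exact (pow_succ _ 2).ge

end FourthMoments

theorem fourth_moment_sum_expansion_general
    {Ω : Type*} [MeasurableSpace Ω] (μ : Measure Ω) [IsProbabilityMeasure μ]
    {M : ℕ} (a b : Ω → EuclideanSpace ℝ (Fin M))
    (hindep : IndepFun a b μ)
    (hbmean : ∫ ω, b ω ∂μ = 0)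
    (ha4 : MemLp a 4 μ) (hb4 : MemLp b 4 μ) :
    ∫ ω, ‖a ω + b ω‖ ^ 4 ∂μ
      ≤ (∫ ω, ‖a ω‖ ^ 4 ∂μ) + 3 * (∫ ω, ‖b ω‖ ^ 4 ∂μ)
        + 8 * ∫ ω, ‖a ω‖ ^ 2 * ‖b ω‖ ^ 2 ∂μ := by
  have hA := ha4.integrable_norm_pow' (p := 4)
  have hB := hb4.integrable_norm_pow' (p := 4)
  have hAB := ha4.integrable_norm_sq_mul_norm_sq hb4
  have hsmul := ha4.integrable_norm_sq_smul
  have hb := hb4.integrable (by norm_num)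
  have hindep' : IndepFun (fun ω => ‖a ω‖ ^ 2 • a ω) b μ :=
    hindep.comp ((continuous_norm.pow 2).smul continuous_id).measurable measurable_id
  have hcross := hindep'.integrable_inner hsmul hb
  have hcross_zero : ∫ ω, ⟪‖a ω‖ ^ 2 • a ω, b ω⟫ ∂μ = 0 := by
    rw [hindep'.integral_inner hsmul hb, hbmean, inner_zero_right]
  have h₁ : Integrable (fun ω => ‖a ω‖ ^ 4 + 3 * ‖b ω‖ ^ 4) μ := hA.add (hB.const_mul 3)
  have h₂ : Integrable (fun ω => ‖a ω‖ ^ 4 + 3 * ‖b ω‖ ^ 4 + 8 * (‖a ω‖ ^ 2 * ‖b ω‖ ^ 2)) μ :=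
    h₁.add (hAB.const_mul 8)
  calc ∫ ω, ‖a ω + b ω‖ ^ 4 ∂μ
      ≤ ∫ ω, ‖a ω‖ ^ 4 + 3 * ‖b ω‖ ^ 4 + 8 * (‖a ω‖ ^ 2 * ‖b ω‖ ^ 2)
          + 4 * ⟪‖a ω‖ ^ 2 • a ω, b ω⟫ ∂μ :=
        integral_mono_of_nonneg (ae_of_all _ fun ω => by positivity)
          (h₂.add (hcross.const_mul 4)) (ae_of_all _ fun ω => norm_add_pow_four_le (a ω) (b ω))
    _ = _ := by
        rw [integral_add h₂ (hcross.const_mul 4), integral_add h₁ (hAB.const_mul 8),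
          integral_add hA (hB.const_mul 3), integral_const_mul, integral_const_mul,
          integral_const_mul, hcross_zero, mul_zero, add_zero]

/-- **Fourth-moment expansion inequality.**
If `a` and `b` are independent random vectors in `ℝ^M` with `E[b] = 0` and finite fourth
moments, then `E‖a + b‖⁴ ≤ E‖a‖⁴ + 3 E‖b‖⁴ + 8 E[‖a‖² ‖b‖²]`. -/
theorem fourth_moment_sum_expansion
    {Ω : Type*} [MeasurableSpace Ω] (μ : Measure Ω) [IsProbabilityMeasure μ]
    {M : ℕ} (a b : Ω → EuclideanSpace ℝ (Fin M))
    (hameas : AEMeasurable a μ) (hbmeas : AEMeasurable b μ)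
    (hindep : IndepFun a b μ)
    (hbmean : ∫ ω, b ω ∂μ = 0)
    (ha4 : MemLp a 4 μ) (hb4 : MemLp b 4 μ) :
    ∫ ω, ‖a ω + b ω‖ ^ 4 ∂μ
      ≤ (∫ ω, ‖a ω‖ ^ 4 ∂μ) + 3 * (∫ ω, ‖b ω‖ ^ 4 ∂μ)
        + 8 * ∫ ω, ‖a ω‖ ^ 2 * ‖b ω‖ ^ 2 ∂μ :=
  fourth_moment_sum_expansion_general μ a b hindep hbmean ha4 hb4
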